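/- arXiv:hep-th/0009146 — 3 statements merged into one kernel-verified Lean document; each statement's English description precedes it below -/
import Mathlib

section
/- If f is continuous and strictly increasing on [s0, ∞) with f(s0) > 0, and g is continuous and positive, and the integral ∫_{s0}^∞ g(s)/f(s)^2 ds converges, then the separation integral L(s0) = 2 ∫_{s0}^∞ (g(s)/f(s)) · f(s0)/√(f(s)² − f(s0)²) ds converges. -/
open MeasureTheory Set Filter Topology

/-!
Since `f'(s₀) > 0`, on some `(s₀, s₁)` we have `f(s) - f(s₀) ≥ m (s - s₀)` with `m > 0`, hence
`f(s)² - f(s₀)² ≥ 2 f(s₀) m (s - s₀)`: there the integrand is `O((s - s₀)^(-1/2))`, which is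
integrable. On `[s₁, ∞)` monotonicity gives `f(s) ≥ f(s₁) > f(s₀)`, so `f(s)² - f(s₀)²` is
comparable to `f(s)²` and the integrand is `O(g/f²)`.
-/

lemma integrableOn_Ioo_sub_rpow {r : ℝ} (hr : -1 < r) {a b : ℝ} (hab : a ≤ b) :
    IntegrableOn (fun s => (s - a) ^ r) (Ioo a b) := by
  rw [← intervalIntegrable_iff_integrableOn_Ioo_of_le hab]
  simpa using (intervalIntegral.intervalIntegrable_rpow' hr (a := 0) (b := b - a)).comp_sub_right a

lemma HasDerivWithinAt.eventually_mul_sub_lt_sub {f : ℝ → ℝ} {f' m a : ℝ}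
    (hf : HasDerivWithinAt f f' (Ici a) a) (hm : m < f') :
    ∀ᶠ s in 𝓝[>] a, m * (s - a) < f s - f a := by
  have hslope := hasDerivWithinAt_iff_tendsto_slope.mp hf
  rw [Ici_sdiff_left] at hslope
  filter_upwards [hslope.eventually_const_lt hm, self_mem_nhdsWithin] with s hs has
  rwa [slope_def_field, lt_div_iff₀ (sub_pos.mpr has)] at hs

noncomputable def separationIntegrand (f g : ℝ → ℝ) (s0 s : ℝ) : ℝ :=
  2 * (g s / f s) * (f s0 / √(f s ^ 2 - f s0 ^ 2))

section
variable {f g : ℝ → ℝ} {a s : ℝ}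

lemma ContinuousOn.aestronglyMeasurable_separationIntegrand {μ : Measure ℝ} {t : Set ℝ}
    (hf : ContinuousOn f t) (hg : ContinuousOn g t) (ht : MeasurableSet t) :
    AEStronglyMeasurable (separationIntegrand f g a) (μ.restrict t) := by
  have hf' := (hf.aestronglyMeasurable (μ := μ) ht).aemeasurable
  have hg' := (hg.aestronglyMeasurable (μ := μ) ht).aemeasurable
  unfold separationIntegrand
  fun_prop

lemma norm_separationIntegrand_le_mul_sub_rpow {m : ℝ} (hfa : 0 < f a) (hm : 0 < m) (has : a < s)
    (hlin : m * (s - a) ≤ f s - f a) :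
    ‖separationIntegrand f g a s‖ ≤ 2 * |g s| / √(2 * f a * m) * (s - a) ^ (-(1 / 2) : ℝ) := by
  have hfs : f a ≤ f s := by nlinarith
  have hsqrt : √(2 * f a * m) * √(s - a) ≤ √(f s ^ 2 - f a ^ 2) := by
    rw [← Real.sqrt_mul (by positivity)]
    exact Real.sqrt_le_sqrt (by nlinarith)
  have hden : 0 < √(2 * f a * m) * √(s - a) := by
    have := sub_pos.mpr has
    positivity
  rw [Real.rpow_neg (sub_pos.mpr has).le, ← Real.sqrt_eq_rpow, separationIntegrand, norm_mul,
    norm_mul, norm_div, norm_div, Real.norm_of_nonneg (Real.sqrt_nonneg _), Real.norm_two,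
    Real.norm_of_nonneg hfa.le, Real.norm_of_nonneg (hfa.trans_le hfs).le]
  calc 2 * (|g s| / f s) * (f a / √(f s ^ 2 - f a ^ 2))
      ≤ 2 * (|g s| / f a) * (f a / (√(2 * f a * m) * √(s - a))) := by gcongr
    _ = 2 * |g s| / √(2 * f a * m) * (√(s - a))⁻¹ := by field_simp

lemma norm_separationIntegrand_le_mul_norm_div_sq {b : ℝ} (hfa : 0 < f a) (hab : f a < f b)
    (hbs : f b ≤ f s) :
    ‖separationIntegrand f g a s‖ ≤ 2 * f a / √(1 - (f a / f b) ^ 2) * ‖g s / f s ^ 2‖ := by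
  have hfb : 0 < f b := hfa.trans hab
  have hfs : 0 < f s := hfb.trans_le hbs
  have hκ : 0 < 1 - (f a / f b) ^ 2 := by
    rw [sub_pos, div_pow, div_lt_one (by positivity)]
    exact pow_lt_pow_left₀ hab hfa.le two_ne_zero
  have hsqrt : √(1 - (f a / f b) ^ 2) * f s ≤ √(f s ^ 2 - f a ^ 2) := by
    rw [← Real.sqrt_sq hfs.le, ← Real.sqrt_mul hκ.le, Real.sqrt_sq hfs.le]
    refine Real.sqrt_le_sqrt ?_
    have : f a ^ 2 ≤ (f a / f b) ^ 2 * f s ^ 2 := by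
      rw [div_pow, div_mul_eq_mul_div, le_div_iff₀ (by positivity)]
      gcongr
    nlinarith
  rw [separationIntegrand, norm_mul, norm_mul, norm_div, norm_div, norm_div,
    Real.norm_of_nonneg (Real.sqrt_nonneg _), Real.norm_two, Real.norm_of_nonneg hfa.le,
    Real.norm_of_nonneg hfs.le, Real.norm_of_nonneg (by positivity : 0 ≤ f s ^ 2)]
  calc 2 * (‖g s‖ / f s) * (f a / √(f s ^ 2 - f a ^ 2))
      ≤ 2 * (‖g s‖ / f s) * (f a / (√(1 - (f a / f b) ^ 2) * f s)) := by gcongr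
    _ = 2 * f a / √(1 - (f a / f b) ^ 2) * (‖g s‖ / f s ^ 2) := by field_simp

lemma integrableOn_Ioo_separationIntegrand {b m : ℝ} (hab : a ≤ b) (hf : ContinuousOn f (Icc a b))
    (hg : ContinuousOn g (Icc a b)) (hfa : 0 < f a) (hm : 0 < m)
    (hlin : ∀ s ∈ Ioo a b, m * (s - a) ≤ f s - f a) :
    IntegrableOn (separationIntegrand f g a) (Ioo a b) := by
  obtain ⟨G, hG⟩ := isCompact_Icc.exists_bound_of_continuousOn hg
  have hdom := (integrableOn_Ioo_sub_rpow (by norm_num : (-1 : ℝ) < -(1 / 2)) hab).const_mul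
    (2 * G / √(2 * f a * m))
  refine hdom.mono' ((hf.mono Ioo_subset_Icc_self).aestronglyMeasurable_separationIntegrand
    (hg.mono Ioo_subset_Icc_self) measurableSet_Ioo) ?_
  filter_upwards [ae_restrict_mem measurableSet_Ioo] with s hs
  refine (norm_separationIntegrand_le_mul_sub_rpow hfa hm hs.1 (hlin s hs)).trans ?_
  have hgG : |g s| ≤ G := hG s (Ioo_subset_Icc_self hs)
  have hs_pow : 0 ≤ (s - a) ^ (-(1 / 2) : ℝ) := Real.rpow_nonneg (sub_pos.mpr hs.1).le _
  gcongr

lemma integrableOn_Ici_separationIntegrand {b : ℝ} (hf : ContinuousOn f (Ici b))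
    (hg : ContinuousOn g (Ici b)) (hfa : 0 < f a) (hab : f a < f b) (hmono : MonotoneOn f (Ici b))
    (hint : IntegrableOn (fun s => g s / f s ^ 2) (Ici b)) :
    IntegrableOn (separationIntegrand f g a) (Ici b) := by
  refine (hint.norm.const_mul (2 * f a / √(1 - (f a / f b) ^ 2))).mono'
    (hf.aestronglyMeasurable_separationIntegrand hg measurableSet_Ici) ?_
  filter_upwards [ae_restrict_mem measurableSet_Ici] with s hs
  exact norm_separationIntegrand_le_mul_norm_div_sq hfa hab (hmono self_mem_Ici hs hs)

end

theorem separation_integral_converges_general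
    (f g : ℝ → ℝ) (s0 : ℝ)
    (hf_cont : ContinuousOn f (Ici s0))
    (hf_mono : StrictMonoOn f (Ici s0))
    (hf_pos : 0 < f s0)
    (hg_cont : ContinuousOn g (Ici s0))
    (hf_deriv : 0 < derivWithin f (Ici s0) s0)
    (h_int : IntegrableOn (fun s => g s / (f s) ^ 2) (Ioi s0)) :
    IntegrableOn
      (fun s => 2 * (g s / f s) * (f s0 / Real.sqrt ((f s) ^ 2 - (f s0) ^ 2)))
      (Ioi s0) := by
  have hderiv : HasDerivWithinAt f (derivWithin f (Ici s0) s0) (Ici s0) s0 :=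
    (differentiableWithinAt_of_derivWithin_ne_zero hf_deriv.ne').hasDerivWithinAt
  obtain ⟨b, hb, hlin⟩ := mem_nhdsGT_iff_exists_Ioo_subset.mp
    (hderiv.eventually_mul_sub_lt_sub (half_lt_self hf_deriv))
  have hb_mem : b ∈ Ici s0 := (mem_Ioi.mp hb).le
  change IntegrableOn (separationIntegrand f g s0) (Ioi s0)
  rw [← Ioo_union_Ici_eq_Ioi hb]
  refine IntegrableOn.union ?_ ?_
  · exact integrableOn_Ioo_separationIntegrand hb_mem (hf_cont.mono Icc_subset_Ici_self)
      (hg_cont.mono Icc_subset_Ici_self) hf_pos (half_pos hf_deriv) fun s hs => (hlin hs).le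
  · have hIci : Ici b ⊆ Ici s0 := Ici_subset_Ici.mpr hb_mem
    exact integrableOn_Ici_separationIntegrand (hf_cont.mono hIci) (hg_cont.mono hIci) hf_pos
      (hf_mono self_mem_Ici hb_mem hb) (hf_mono.monotoneOn.mono hIci)
      (h_int.mono_set (Ici_subset_Ioi.mpr hb))

/-- If `f` is continuous and strictly increasing on `[s0, ∞)` with `f s0 > 0`,
`g` is continuous and positive there, `f` is continuously differentiable with
`deriv f s0 > 0`, and `∫_{s0}^∞ g/f² < ∞`, then the separation integral
`L(s0) = 2 ∫_{s0}^∞ (g/f) · f(s0)/√(f² − f(s0)²)` converges. -/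
theorem separation_integral_converges
    (f g : ℝ → ℝ) (s0 : ℝ)
    (hf_cont : ContinuousOn f (Ici s0))
    (hf_mono : StrictMonoOn f (Ici s0))
    (hf_pos : 0 < f s0)
    (hg_cont : ContinuousOn g (Ici s0))
    (hg_pos : ∀ s ∈ Ici s0, 0 < g s)
    (hf_diff : ContDiffOn ℝ 1 f (Ici s0))
    (hf_deriv : 0 < derivWithin f (Ici s0) s0)
    (h_int : IntegrableOn (fun s => g s / (f s) ^ 2) (Ioi s0)) :
    IntegrableOn
      (fun s => 2 * (g s / f s) * (f s0 / Real.sqrt ((f s) ^ 2 - (f s0) ^ 2)))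
      (Ioi s0) :=
  separation_integral_converges_general f g s0 hf_cont hf_mono hf_pos hg_cont hf_deriv h_int
end

section
/- Let f(s) = a s^k and g(s) = b s^j on (0,∞) with a, b > 0 and k > j + 1 > 0. Then the separation distance satisfies the exact scaling law L(s0) = C · s0^{j+1−k}, where C = 2(b/a) ∫_1^∞ u^{j−k}/√(u^{2k} − 1) du is a finite positive constant independent of s0. -/
/-!
Substituting `s = s₀ u` turns the integrand into `(b/a) s₀^(j-k) u^(j-k)/√(u^(2k)-1)`, and the
Jacobian contributes one more factor `s₀`; this gives the exact power law. The `u`-integral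
converges because near `u = 1` the integrand is `O((u-1)^(-1/2))` (as `u^(2k) ≥ u` for `2k ≥ 1`),
and at infinity it is `O(u^(j-2k))` with `j - 2k < -1`.
-/

open MeasureTheory Set

noncomputable def separationKernel (j k u : ℝ) : ℝ := u ^ (j - k) / √(u ^ (2 * k) - 1)

lemma setIntegral_pos_of_forall_pos {X : Type*} [MeasurableSpace X] {μ : Measure X} {s : Set X}
    {f : X → ℝ} (hs : MeasurableSet s) (hμs : μ s ≠ 0) (hf : ∀ x ∈ s, 0 < f x)
    (hfi : IntegrableOn f s μ) : 0 < ∫ x in s, f x ∂μ := by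
  refine (setIntegral_pos_iff_support_of_nonneg_ae
    (ae_restrict_of_forall_mem hs fun x hx => (hf x hx).le) hfi).2 ?_
  have hsupp : s ⊆ Function.support f := fun x hx => (hf x hx).ne'
  rwa [inter_eq_right.2 hsupp, pos_iff_ne_zero]

lemma integrableOn_Ioc_one_two_inv_sqrt_rpow_sub_one {k : ℝ} (hk : 1 ≤ 2 * k) :
    IntegrableOn (fun u : ℝ => (√(u ^ (2 * k) - 1))⁻¹) (Ioc 1 2) := by
  have hdom : IntegrableOn (fun u : ℝ => (u - 1) ^ (-(1 / 2) : ℝ)) (Ioc 1 2) := by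
    have h := (intervalIntegral.intervalIntegrable_rpow' (a := 0) (b := 1)
      (r := -(1 / 2)) (by norm_num)).comp_sub_right 1
    norm_num at h
    simpa using h.1
  refine hdom.mono' (by fun_prop) (ae_restrict_of_forall_mem measurableSet_Ioc ?_)
  rintro u ⟨hu1, -⟩
  have hu : u ≤ u ^ (2 * k) := Real.self_le_rpow_of_one_le hu1.le hk
  rw [Real.norm_of_nonneg (inv_nonneg.2 (Real.sqrt_nonneg _)), Real.rpow_neg (by linarith),
    ← Real.sqrt_eq_rpow]
  exact inv_anti₀ (Real.sqrt_pos.2 (by linarith)) (Real.sqrt_le_sqrt (by linarith))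

lemma separationKernel_le_sqrt_two_mul_rpow {j k u : ℝ} (hk : 1 ≤ 2 * k) (hu : 2 ≤ u) :
    separationKernel j k u ≤ √2 * u ^ (j - 2 * k) := by
  have hu0 : 0 < u := by linarith
  have hsq : u ^ (2 * k) = (u ^ k) ^ 2 := by
    rw [mul_comm, Real.rpow_mul hu0.le, Real.rpow_two]
  have h2 : 2 ≤ u ^ (2 * k) := hu.trans (Real.self_le_rpow_of_one_le (by linarith) hk)
  -- `u^(2k) - 1 ≥ u^(2k) / 2` once `u^(2k) ≥ 2`
  have hden : u ^ k / √2 ≤ √(u ^ (2 * k) - 1) := by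
    rw [div_le_iff₀ (by positivity), ← Real.sqrt_sq (Real.rpow_nonneg hu0.le k), ← hsq,
      ← Real.sqrt_mul (by linarith)]
    exact Real.sqrt_le_sqrt (by linarith)
  calc separationKernel j k u ≤ u ^ (j - k) / (u ^ k / √2) :=
        div_le_div_of_nonneg_left (by positivity) (by positivity) hden
    _ = √2 * u ^ (j - 2 * k) := by
        rw [div_div_eq_mul_div, show j - 2 * k = (j - k) - k by ring, Real.rpow_sub hu0 (j - k) k]
        ring

lemma integrableOn_separationKernel {j k : ℝ} (hk : 1 ≤ 2 * k) (hjk : j + 1 < 2 * k) :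
    IntegrableOn (separationKernel j k) (Ioi 1) := by
  rw [← Ioc_union_Ioi_eq_Ioi one_le_two]
  refine IntegrableOn.union ?_ ?_
  · have hcont : ContinuousOn (fun u : ℝ => u ^ (j - k)) (Icc 1 2) := fun u hu =>
      (Real.continuousAt_rpow_const _ _ (Or.inl (by linarith [hu.1]))).continuousWithinAt
    exact ((integrableOn_Ioc_one_two_inv_sqrt_rpow_sub_one hk).continuousOn_mul_of_subset hcont
      isCompact_Icc measurableSet_Ioc Ioc_subset_Icc_self).congr_fun
      (fun u _ => (div_eq_mul_inv _ _).symm) measurableSet_Ioc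
  · have hdom := (integrableOn_Ioi_rpow_of_lt (a := j - 2 * k) (by linarith) two_pos).const_mul √2
    refine hdom.mono' (by unfold separationKernel; fun_prop : Measurable _).aestronglyMeasurable
      (ae_restrict_of_forall_mem measurableSet_Ioi ?_)
    intro u (hu : 2 < u)
    rw [Real.norm_of_nonneg (by unfold separationKernel; positivity)]
    exact separationKernel_le_sqrt_two_mul_rpow hk hu.le

lemma separationKernel_pos {j k u : ℝ} (hk : 0 < k) (hu : 1 < u) : 0 < separationKernel j k u := by
  have : 1 < u ^ (2 * k) := Real.one_lt_rpow hu (by linarith)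
  unfold separationKernel
  exact div_pos (by positivity) (Real.sqrt_pos.2 (by linarith))

lemma separation_integrand_mul_left {a b j k s₀ u : ℝ} (ha : 0 < a) (hs₀ : 0 < s₀) (hu : 0 < u) :
    b * (s₀ * u) ^ j / (a * (s₀ * u) ^ k) *
        (a * s₀ ^ k / √((a * (s₀ * u) ^ k) ^ 2 - (a * s₀ ^ k) ^ 2)) =
      b / a * s₀ ^ (j - k) * separationKernel j k u := by
  have hscale : a * s₀ ^ k ≠ 0 := by positivity
  have hsqrt : √((a * (s₀ * u) ^ k) ^ 2 - (a * s₀ ^ k) ^ 2) =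
      a * s₀ ^ k * √(u ^ (2 * k) - 1) := by
    rw [Real.mul_rpow hs₀.le hu.le, mul_comm 2 k, Real.rpow_mul hu.le, Real.rpow_two,
      show (a * (s₀ ^ k * u ^ k)) ^ 2 - (a * s₀ ^ k) ^ 2 = (a * s₀ ^ k) ^ 2 * ((u ^ k) ^ 2 - 1)
        by ring, Real.sqrt_mul (sq_nonneg _), Real.sqrt_sq (by positivity)]
  rw [hsqrt, separationKernel, Real.mul_rpow hs₀.le hu.le, Real.mul_rpow hs₀.le hu.le,
    Real.rpow_sub hs₀, Real.rpow_sub hu]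
  field_simp

lemma integral_Ioi_separation {a b j k s₀ : ℝ} (ha : 0 < a) (hs₀ : 0 < s₀) :
    ∫ s in Ioi s₀, b * s ^ j / (a * s ^ k) *
        (a * s₀ ^ k / √((a * s ^ k) ^ 2 - (a * s₀ ^ k) ^ 2)) =
      b / a * s₀ ^ (j + 1 - k) * ∫ u in Ioi 1, separationKernel j k u := by
  rw [← mul_one s₀, ← integral_comp_mul_left_Ioi' _ _ hs₀, mul_one,
    setIntegral_congr_fun measurableSet_Ioi fun u (hu : 1 < u) =>
      separation_integrand_mul_left ha hs₀ (one_pos.trans hu),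
    integral_const_mul, smul_eq_mul, show j + 1 - k = j - k + 1 by ring,
    Real.rpow_add_one hs₀.ne']
  ring

theorem separation_scaling_law_general
    (a b k j : ℝ) (ha : 0 < a) (hb : 0 < b) (hk : j + 1 < k)
    (hk1 : 1 ≤ k) :
    IntegrableOn (fun u => u ^ (j - k) / Real.sqrt (u ^ (2 * k) - 1)) (Ioi 1)
    ∧ 0 < 2 * (b / a) * ∫ u in Ioi 1, u ^ (j - k) / Real.sqrt (u ^ (2 * k) - 1)
    ∧ ∀ s0 : ℝ, 0 < s0 →
      2 * (∫ s in Ioi s0, (b * s ^ j / (a * s ^ k)) *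
        ((a * s0 ^ k) / Real.sqrt ((a * s ^ k) ^ 2 - (a * s0 ^ k) ^ 2)))
      = (2 * (b / a) * ∫ u in Ioi 1, u ^ (j - k) / Real.sqrt (u ^ (2 * k) - 1))
          * s0 ^ (j + 1 - k) := by
  have hint : IntegrableOn (separationKernel j k) (Ioi 1) :=
    integrableOn_separationKernel (by linarith) (by linarith)
  have hpos : 0 < ∫ u in Ioi 1, separationKernel j k u :=
    setIntegral_pos_of_forall_pos measurableSet_Ioi (by simp)
      (fun u hu => separationKernel_pos (by linarith) hu) hint
  refine ⟨hint, by positivity, fun s0 hs0 => ?_⟩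
  rw [integral_Ioi_separation ha hs0]
  simp only [separationKernel]
  ring

/-- Pure power case `f(s) = a s^k`, `g(s) = b s^j`, `k > j+1 > 0`, `k ≥ 1`:
the separation distance obeys the exact scaling law `L(s0) = C · s0^(j+1−k)`,
where `C = 2(b/a) ∫_1^∞ u^(j−k)/√(u^(2k)−1) du` is a finite positive constant. -/
theorem separation_scaling_law
    (a b k j : ℝ) (ha : 0 < a) (hb : 0 < b) (hj : 0 < j + 1) (hk : j + 1 < k)
    (hk1 : 1 ≤ k) :
    IntegrableOn (fun u => u ^ (j - k) / Real.sqrt (u ^ (2 * k) - 1)) (Ioi 1)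
    ∧ 0 < 2 * (b / a) * ∫ u in Ioi 1, u ^ (j - k) / Real.sqrt (u ^ (2 * k) - 1)
    ∧ ∀ s0 : ℝ, 0 < s0 →
      2 * (∫ s in Ioi s0, (b * s ^ j / (a * s ^ k)) *
        ((a * s0 ^ k) / Real.sqrt ((a * s ^ k) ^ 2 - (a * s0 ^ k) ^ 2)))
      = (2 * (b / a) * ∫ u in Ioi 1, u ^ (j - k) / Real.sqrt (u ^ (2 * k) - 1))
          * s0 ^ (j + 1 - k) :=
  separation_scaling_law_general a b k j ha hb hk hk1
end

section
/- With f(s) = a s^k, g(s) = b s^j, a, b > 0, k > j + 1 > 0, the renormalized energy E(s0) = f(s0) L(s0) + 2∫_{s0}^∞ (g/f)(√(f²−f(s0)²) − f) ds − 2∫_0^{s0} g ds scales as E(s0) = −D · s0^{j+1} for a constant D, and hence E = −d' · L^{−(j+1)/(k−j−1)} for some constant d' depending only on a, b, j, k. -/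
/-! Substituting `s = s₀ u` turns each integral into a power of `s₀` times an `s₀`-independent
profile integral over `u > 1`, so that `L(s₀) = C s₀^(j+1-k)` and `E(s₀) = -D s₀^(j+1)`;
eliminating `s₀` gives `E = -D C^(-e) L^e` with `e = (j+1)/(j+1-k)`. This needs `C > 0`, i.e.
convergence of the length profile, whose integrand is `O((u-1)^(-1/2))` near `1` and
`O(u^(j-3k/2))` at infinity because `u^k - 1 ≥ k log u ≥ k (1 - u⁻¹)`. -/

open MeasureTheory Set

noncomputable def lengthIntegrand (k j u : ℝ) : ℝ := u ^ (j - k) / √((u ^ k) ^ 2 - 1)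

noncomputable def lengthProfile (k j : ℝ) : ℝ := ∫ u in Ioi 1, lengthIntegrand k j u

noncomputable def energyProfile (k j : ℝ) : ℝ :=
  ∫ u in Ioi 1, u ^ (j - k) * (√((u ^ k) ^ 2 - 1) - u ^ k)

lemma mul_one_sub_inv_le_rpow_sub_one {u k : ℝ} (hu : 0 < u) (hk : 0 ≤ k) :
    k * (1 - u⁻¹) ≤ u ^ k - 1 := by
  have hexp := Real.add_one_le_exp (Real.log u * k)
  rw [← Real.rpow_def_of_pos hu] at hexp
  nlinarith [mul_le_mul_of_nonneg_left (Real.one_sub_inv_le_log_of_pos hu) hk]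

lemma lengthIntegrand_le {k j u : ℝ} (hk : 0 < k) (hu : 1 < u) :
    lengthIntegrand k j u ≤ u ^ (j - k) / √(k * (1 - u⁻¹) * u ^ k) := by
  have hu0 : 0 < u := one_pos.trans hu
  have hone : 1 ≤ u ^ k := Real.one_le_rpow hu.le hk.le
  have hsub := mul_one_sub_inv_le_rpow_sub_one hu0 hk.le
  have hinv : u⁻¹ < 1 := inv_lt_one_of_one_lt₀ hu
  have hpos : 0 < k * (1 - u⁻¹) * u ^ k := by
    have := sub_pos.2 hinv
    positivity
  refine div_le_div_of_nonneg_left (Real.rpow_nonneg hu0.le _) (Real.sqrt_pos.2 hpos)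
    (Real.sqrt_le_sqrt ?_)
  nlinarith

lemma lengthIntegrand_le_of_le_two {k j u : ℝ} (hk : 0 < k) (hjk : j ≤ k) (hu : 1 < u)
    (hu2 : u ≤ 2) : lengthIntegrand k j u ≤ √(2 / k) * (u - 1) ^ (-(1 / 2) : ℝ) := by
  have hu0 : 0 < u := one_pos.trans hu
  have hnum : u ^ (j - k) ≤ 1 := Real.rpow_le_one_of_one_le_of_nonpos hu.le (by linarith)
  have hden : k / 2 * (u - 1) ≤ k * (1 - u⁻¹) * u ^ k := by
    have hone : 1 ≤ u ^ k := Real.one_le_rpow hu.le hk.le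
    have hinv : (u - 1) / 2 ≤ 1 - u⁻¹ := by
      rw [show 1 - u⁻¹ = (u - 1) / u by field_simp]
      exact div_le_div_of_nonneg_left (by linarith) hu0 hu2
    have : 0 ≤ k * (1 - u⁻¹) := mul_nonneg hk.le (by linarith)
    nlinarith [mul_le_mul_of_nonneg_left hinv hk.le, mul_le_mul_of_nonneg_left hone this]
  calc lengthIntegrand k j u ≤ u ^ (j - k) / √(k * (1 - u⁻¹) * u ^ k) :=
        lengthIntegrand_le hk hu
    _ ≤ 1 / √(k / 2 * (u - 1)) :=
        div_le_div₀ zero_le_one hnum (Real.sqrt_pos.2 (by nlinarith)) (Real.sqrt_le_sqrt hden)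
    _ = √(2 / k) * (u - 1) ^ (-(1 / 2) : ℝ) := by
        rw [Real.rpow_neg (by linarith), ← Real.sqrt_eq_rpow, Real.sqrt_mul (by positivity),
          Real.sqrt_div' _ two_pos.le, Real.sqrt_div' _ hk.le]
        field_simp

lemma lengthIntegrand_le_of_two_le {k j u : ℝ} (hk : 0 < k) (hu : 2 ≤ u) :
    lengthIntegrand k j u ≤ √(2 / k) * u ^ (j - k - k / 2) := by
  have hu0 : 0 < u := by linarith
  have hden : k / 2 * u ^ k ≤ k * (1 - u⁻¹) * u ^ k := by
    have : u⁻¹ ≤ 2⁻¹ := (inv_le_inv₀ hu0 two_pos).2 hu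
    exact mul_le_mul_of_nonneg_right (by nlinarith) (Real.rpow_nonneg hu0.le k)
  calc lengthIntegrand k j u ≤ u ^ (j - k) / √(k * (1 - u⁻¹) * u ^ k) :=
        lengthIntegrand_le hk (by linarith)
    _ ≤ u ^ (j - k) / √(k / 2 * u ^ k) := by gcongr
    _ = √(2 / k) * u ^ (j - k - k / 2) := by
        rw [Real.sqrt_mul (by positivity), Real.sqrt_eq_rpow (u ^ k), ← Real.rpow_mul hu0.le,
          Real.rpow_sub hu0 (j - k) (k / 2), Real.sqrt_div' _ two_pos.le,
          Real.sqrt_div' _ hk.le, show k * (1 / 2) = k / 2 by ring]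
        field_simp

lemma lengthIntegrand_pos {k j u : ℝ} (hk : 0 < k) (hu : 1 < u) : 0 < lengthIntegrand k j u := by
  have hu0 : 0 < u := one_pos.trans hu
  have : 1 < u ^ k := Real.one_lt_rpow hu hk
  exact div_pos (Real.rpow_pos_of_pos hu0 _) (Real.sqrt_pos.2 (by nlinarith))

lemma integrableOn_lengthIntegrand {k j : ℝ} (hk : 0 < k) (hjk : j + 1 < k) :
    IntegrableOn (lengthIntegrand k j) (Ioi 1) := by
  have hmeas : AEStronglyMeasurable (lengthIntegrand k j) := by
    refine Measurable.aestronglyMeasurable ?_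
    unfold lengthIntegrand
    fun_prop
  rw [← Ioc_union_Ioi_eq_Ioi one_le_two]
  refine IntegrableOn.union ?_ ?_
  · have hsing : IntegrableOn (fun u : ℝ => √(2 / k) * (u - 1) ^ (-(1 / 2) : ℝ)) (Ioc 1 2) := by
      have h := (intervalIntegral.intervalIntegrable_rpow'
        (show (-1 : ℝ) < -(1 / 2) by norm_num) (a := 0) (b := 1)).comp_sub_right 1
      norm_num at h
      exact ((intervalIntegrable_iff_integrableOn_Ioc_of_le one_le_two).1 h).const_mul _
    refine hsing.mono' hmeas.restrict ?_
    filter_upwards [ae_restrict_mem measurableSet_Ioc] with u ⟨h1u, hu2⟩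
    rw [Real.norm_of_nonneg (lengthIntegrand_pos hk h1u).le]
    exact lengthIntegrand_le_of_le_two hk (by linarith) h1u hu2
  · have hdecay : IntegrableOn (fun u : ℝ => √(2 / k) * u ^ (j - k - k / 2)) (Ioi 2) :=
      (integrableOn_Ioi_rpow_of_lt (by linarith) two_pos).const_mul _
    refine hdecay.mono' hmeas.restrict ?_
    filter_upwards [ae_restrict_mem measurableSet_Ioi] with u (h2u : 2 < u)
    rw [Real.norm_of_nonneg (lengthIntegrand_pos hk (by linarith)).le]
    exact lengthIntegrand_le_of_two_le hk h2u.le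

lemma lengthProfile_pos {k j : ℝ} (hk : 0 < k) (hjk : j + 1 < k) : 0 < lengthProfile k j := by
  rw [lengthProfile,
    setIntegral_pos_iff_support_of_nonneg_ae _ (integrableOn_lengthIntegrand hk hjk)]
  · have hsupp : Ioi 1 ⊆ Function.support (lengthIntegrand k j) := fun u hu =>
      (lengthIntegrand_pos hk hu).ne'
    rw [inter_eq_right.2 hsupp, Real.volume_Ioi]
    simp
  · filter_upwards [ae_restrict_mem measurableSet_Ioi] with u hu
    exact (lengthIntegrand_pos hk hu).le

lemma setIntegral_Ioi_eq_smul_setIntegral_Ioi_one {E : Type*} [NormedAddCommGroup E]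
    [NormedSpace ℝ E] (F : ℝ → E) {c : ℝ} (hc : 0 < c) :
    ∫ s in Ioi c, F s = c • ∫ u in Ioi 1, F (c * u) := by
  simpa using (integral_comp_mul_left_Ioi' F 1 hc).symm

lemma sqrt_sq_mul_sub_sq {c : ℝ} (hc : 0 ≤ c) (t : ℝ) :
    √((c * t) ^ 2 - c ^ 2) = c * √(t ^ 2 - 1) := by
  rw [show (c * t) ^ 2 - c ^ 2 = c ^ 2 * (t ^ 2 - 1) by ring, Real.sqrt_mul (sq_nonneg c),
    Real.sqrt_sq hc]

variable {a b k j s0 : ℝ}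

lemma setIntegral_Ioi_length_eq (ha : 0 < a) (hs0 : 0 < s0) :
    ∫ s in Ioi s0, b * s ^ j / (a * s ^ k) * (a * s0 ^ k / √((a * s ^ k) ^ 2 - (a * s0 ^ k) ^ 2))
      = b / a * s0 ^ (j + 1 - k) * lengthProfile k j := by
  calc _ = s0 * ∫ u in Ioi 1, b / a * s0 ^ (j - k) * lengthIntegrand k j u := by
        rw [setIntegral_Ioi_eq_smul_setIntegral_Ioi_one _ hs0, smul_eq_mul]
        congr 1
        refine setIntegral_congr_fun measurableSet_Ioi fun u (hu : 1 < u) => ?_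
        have hu0 : 0 < u := one_pos.trans hu
        have hs0k : 0 < a * s0 ^ k := mul_pos ha (Real.rpow_pos_of_pos hs0 k)
        rw [Real.mul_rpow hs0.le hu0.le, Real.mul_rpow hs0.le hu0.le,
          show a * (s0 ^ k * u ^ k) = a * s0 ^ k * u ^ k by ring, sqrt_sq_mul_sub_sq hs0k.le,
          lengthIntegrand, Real.rpow_sub hs0, Real.rpow_sub hu0]
        have := Real.rpow_pos_of_pos hu0 k
        field_simp
    _ = _ := by
        rw [integral_const_mul, lengthProfile, show j + 1 - k = j - k + 1 by ring,
          Real.rpow_add_one hs0.ne']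
        ring

lemma setIntegral_Ioi_energy_eq (ha : 0 < a) (hs0 : 0 < s0) :
    ∫ s in Ioi s0, b * s ^ j / (a * s ^ k) * (√((a * s ^ k) ^ 2 - (a * s0 ^ k) ^ 2) - a * s ^ k)
      = b * s0 ^ (j + 1) * energyProfile k j := by
  calc _ = s0 * ∫ u in Ioi 1, b * s0 ^ j * (u ^ (j - k) * (√((u ^ k) ^ 2 - 1) - u ^ k)) := by
        rw [setIntegral_Ioi_eq_smul_setIntegral_Ioi_one _ hs0, smul_eq_mul]
        congr 1
        refine setIntegral_congr_fun measurableSet_Ioi fun u (hu : 1 < u) => ?_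
        have hu0 : 0 < u := one_pos.trans hu
        have hs0k : 0 < a * s0 ^ k := mul_pos ha (Real.rpow_pos_of_pos hs0 k)
        rw [Real.mul_rpow hs0.le hu0.le, Real.mul_rpow hs0.le hu0.le,
          show a * (s0 ^ k * u ^ k) = a * s0 ^ k * u ^ k by ring, sqrt_sq_mul_sub_sq hs0k.le,
          Real.rpow_sub hu0]
        have := Real.rpow_pos_of_pos hu0 k
        field_simp
    _ = _ := by
        rw [integral_const_mul, energyProfile, Real.rpow_add_one hs0.ne']
        ring

lemma setIntegral_Ioc_zero_const_mul_rpow (hj : -1 < j) (hs0 : 0 ≤ s0) :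
    ∫ s in Ioc 0 s0, b * s ^ j = b * s0 ^ (j + 1) / (j + 1) := by
  rw [← intervalIntegral.integral_of_le hs0, intervalIntegral.integral_const_mul,
    integral_rpow (Or.inl hj), Real.zero_rpow (by linarith)]
  ring

lemma rpow_eq_rpow_mul_rpow_div {C s p : ℝ} (q : ℝ) (hC : 0 < C) (hs : 0 < s) (hp : p ≠ 0) :
    s ^ q = C ^ (-(q / p)) * (C * s ^ p) ^ (q / p) := by
  rw [Real.mul_rpow hC.le (Real.rpow_nonneg hs.le p), ← Real.rpow_mul hs.le,
    mul_div_cancel₀ q hp, Real.rpow_neg hC.le,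
    inv_mul_cancel_left₀ (Real.rpow_pos_of_pos hC _).ne']

theorem energy_scaling_law_general
    (a b k j : ℝ) (ha : 0 < a) (hb : 0 < b) (hj : 0 < j + 1) (hk : j + 1 < k)
    (L E : ℝ → ℝ)
    (hL : ∀ s0 : ℝ, 0 < s0 →
      L s0 = 2 * ∫ s in Ioi s0, (b * s ^ j / (a * s ^ k)) *
        ((a * s0 ^ k) / Real.sqrt ((a * s ^ k) ^ 2 - (a * s0 ^ k) ^ 2)))
    (hE : ∀ s0 : ℝ, 0 < s0 →
      E s0 = a * s0 ^ k * L s0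
        + 2 * (∫ s in Ioi s0, (b * s ^ j / (a * s ^ k)) *
            (Real.sqrt ((a * s ^ k) ^ 2 - (a * s0 ^ k) ^ 2) - a * s ^ k))
        - 2 * ∫ s in Ioc 0 s0, b * s ^ j) :
    ∃ D d' : ℝ, ∀ s0 : ℝ, 0 < s0 →
      E s0 = -D * s0 ^ (j + 1)
      ∧ E s0 = -d' * (L s0) ^ (-(j + 1) / (k - j - 1)) := by
  set C := 2 * (b / a) * lengthProfile k j with hCdef
  set D := 2 * b / (j + 1) - 2 * b * lengthProfile k j - 2 * b * energyProfile k j with hDdef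
  have hC : 0 < C := by
    have := lengthProfile_pos (by linarith) hk
    positivity
  refine ⟨D, D * C ^ (-((j + 1) / (j + 1 - k))), fun s0 hs0 => ?_⟩
  have hLs : L s0 = C * s0 ^ (j + 1 - k) := by
    rw [hL s0 hs0, setIntegral_Ioi_length_eq ha hs0]
    ring
  have hEs : E s0 = -D * s0 ^ (j + 1) := by
    rw [hE s0 hs0, hLs, setIntegral_Ioi_energy_eq ha hs0,
      setIntegral_Ioc_zero_const_mul_rpow (by linarith) hs0.le, Real.rpow_sub hs0 (j + 1) k,
      hCdef, hDdef]
    field_simp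
    ring
  refine ⟨hEs, ?_⟩
  rw [hEs, hLs, show -(j + 1) / (k - j - 1) = (j + 1) / (j + 1 - k) by
      rw [← neg_div_neg_eq, neg_neg]; congr 1; ring,
    rpow_eq_rpow_mul_rpow_div (j + 1) hC hs0 (by linarith : j + 1 - k < 0).ne]
  ring

/-- Pure power case: the renormalized energy scales as `E(s0) = −D s0^(j+1)`,
and eliminating `s0` against `L(s0) = C s0^(j+1−k)` yields
`E = −d'·L^{−(j+1)/(k−j−1)}`: a Coulomb-like non-confining potential. -/
theorem energy_scaling_law
    (a b k j : ℝ) (ha : 0 < a) (hb : 0 < b) (hj : 0 < j + 1) (hk : j + 1 < k)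
    (hk1 : 1 ≤ k)
    (L E : ℝ → ℝ)
    (hL : ∀ s0 : ℝ, 0 < s0 →
      L s0 = 2 * ∫ s in Ioi s0, (b * s ^ j / (a * s ^ k)) *
        ((a * s0 ^ k) / Real.sqrt ((a * s ^ k) ^ 2 - (a * s0 ^ k) ^ 2)))
    (hE : ∀ s0 : ℝ, 0 < s0 →
      E s0 = a * s0 ^ k * L s0
        + 2 * (∫ s in Ioi s0, (b * s ^ j / (a * s ^ k)) *
            (Real.sqrt ((a * s ^ k) ^ 2 - (a * s0 ^ k) ^ 2) - a * s ^ k))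
        - 2 * ∫ s in Ioc 0 s0, b * s ^ j) :
    ∃ D d' : ℝ, ∀ s0 : ℝ, 0 < s0 →
      E s0 = -D * s0 ^ (j + 1)
      ∧ E s0 = -d' * (L s0) ^ (-(j + 1) / (k - j - 1)) :=
  energy_scaling_law_general a b k j ha hb hj hk L E hL hE
end
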